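/- The polynomial V(x,y) = 1 - 4a₁(x - y) + 4a₁²(x² - 2xy - y²) is an inverse integrating factor of the planar system ẋ = -y, ẏ = x - 2a₁x² + 4a₁xy + 2a₁y², and V(0,0) = 1 ≠ 0. -/

import Mathlib

noncomputable def P8 (a₁ x y : ℝ) : ℝ := -y
noncomputable def Q8 (a₁ x y : ℝ) : ℝ := x - 2*a₁*x^2 + 4*a₁*x*y + 2*a₁*y^2
noncomputable def V8 (a₁ x y : ℝ) : ℝ :=
  1 - 4*a₁*(x - y) + 4*a₁^2*(x^2 - 2*x*y - y^2)

theorem deriv_quadratic {𝕜 : Type*} [NontriviallyNormedField 𝕜] (a b c x : 𝕜) :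
    deriv (fun s => a + b * s + c * s ^ 2) x = b + 2 * c * x := by
  have h := (((hasDerivAt_id' x).const_mul b).const_add a).fun_add
    ((hasDerivAt_pow 2 x).const_mul c)
  rw [h.deriv]
  push_cast
  ring

theorem deriv_of_eq_quadratic {𝕜 : Type*} [NontriviallyNormedField 𝕜] {f : 𝕜 → 𝕜}
    (a b c : 𝕜) (hf : ∀ s, f s = a + b * s + c * s ^ 2) (x : 𝕜) :
    deriv f x = b + 2 * c * x := by
  rw [funext hf, deriv_quadratic]

theorem deriv_P8_fst (a₁ x y : ℝ) : deriv (fun s => P8 a₁ s y) x = 0 :=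
  deriv_const x (-y)

theorem deriv_Q8_snd (a₁ x y : ℝ) :
    deriv (fun s => Q8 a₁ x s) y = 4 * a₁ * (x + y) := by
  rw [deriv_of_eq_quadratic (x - 2*a₁*x^2) (4*a₁*x) (2*a₁) fun s => by unfold Q8; ring]
  ring

theorem deriv_V8_fst (a₁ x y : ℝ) :
    deriv (fun s => V8 a₁ s y) x = -4 * a₁ + 8 * a₁ ^ 2 * (x - y) := by
  rw [deriv_of_eq_quadratic (1 + 4*a₁*y - 4*a₁^2*y^2) (-4*a₁ - 8*a₁^2*y) (4*a₁^2)
    fun s => by unfold V8; ring]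
  ring

theorem deriv_V8_snd (a₁ x y : ℝ) :
    deriv (fun s => V8 a₁ x s) y = 4 * a₁ - 8 * a₁ ^ 2 * (x + y) := by
  rw [deriv_of_eq_quadratic (1 - 4*a₁*x + 4*a₁^2*x^2) (4*a₁ - 8*a₁^2*x) (-4*a₁^2)
    fun s => by unfold V8; ring]
  ring

/-- V is an inverse integrating factor and V(0,0) = 1 ≠ 0. -/
theorem stmt_8 (a₁ : ℝ) :
    (∀ x y : ℝ,
      P8 a₁ x y * deriv (fun s => V8 a₁ s y) x
      + Q8 a₁ x y * deriv (fun s => V8 a₁ x s) y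
      = (deriv (fun s => P8 a₁ s y) x + deriv (fun s => Q8 a₁ x s) y)
          * V8 a₁ x y)
    ∧ V8 a₁ 0 0 = 1 ∧ (1 : ℝ) ≠ 0 := by
  refine ⟨fun x y => ?_, by norm_num [V8], one_ne_zero⟩
  rw [deriv_V8_fst, deriv_V8_snd, deriv_P8_fst, deriv_Q8_snd]
  unfold P8 Q8 V8
  ring
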